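/- arXiv:2309.02698 — 4 statements merged into one kernel-verified Lean document; each statement's English description precedes it below -/
import Mathlib

section
/- Let ρ(x) = √(x² + δ²) with δ > 0 and ρ'(x) = x / √(x² + δ²). Then ρ' is cocoercive with parameter δ: for all x₁, x₂ ∈ ℝ, (ρ'(x₁) − ρ'(x₂))² ≤ δ⁻¹ (x₁ − x₂)(ρ'(x₁) − ρ'(x₂)). -/
/-!
On the real line, a monotone `K`-Lipschitz map `f` satisfies
`(f a - f b)² = |f a - f b| |f a - f b| ≤ K |a - b| |f a - f b| = K (a - b) (f a - f b)`.
The map `x ↦ x / √(x² + δ²)` has derivative `δ² / √(x² + δ²)³`, which lies in `(0, δ⁻¹]`,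
so it is monotone and `δ⁻¹`-Lipschitz.
-/

open NNReal

theorem sq_sub_le_mul_mul_sub_of_monotone_of_lipschitzWith {f : ℝ → ℝ} {K : ℝ≥0}
    (hmono : Monotone f) (hlip : LipschitzWith K f) (a b : ℝ) :
    (f a - f b) ^ 2 ≤ K * ((a - b) * (f a - f b)) := by
  have hprod_nonneg : 0 ≤ (a - b) * (f a - f b) := by
    rcases le_total b a with hba | hab
    · exact mul_nonneg (sub_nonneg.2 hba) (sub_nonneg.2 (hmono hba))
    · exact mul_nonneg_of_nonpos_of_nonpos (sub_nonpos.2 hab) (sub_nonpos.2 (hmono hab))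
  have hdist : |f a - f b| ≤ K * |a - b| := by
    simpa only [Real.dist_eq] using hlip.dist_le_mul a b
  calc (f a - f b) ^ 2 = |f a - f b| * |f a - f b| := by rw [← sq, sq_abs]
    _ ≤ K * |a - b| * |f a - f b| := mul_le_mul_of_nonneg_right hdist (abs_nonneg _)
    _ = K * ((a - b) * (f a - f b)) := by
      rw [mul_assoc, ← abs_mul, abs_of_nonneg hprod_nonneg]

noncomputable def pseudoHuberDeriv (δ x : ℝ) : ℝ := x / √(x ^ 2 + δ ^ 2)

section pseudoHuberDeriv

variable {δ : ℝ}

theorem hasDerivAt_pseudoHuberDeriv (hδ : δ ≠ 0) (x : ℝ) :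
    HasDerivAt (pseudoHuberDeriv δ) (δ ^ 2 / √(x ^ 2 + δ ^ 2) ^ 3) x := by
  have hpos : 0 < x ^ 2 + δ ^ 2 := by positivity
  have hsqrt_pos : 0 < √(x ^ 2 + δ ^ 2) := Real.sqrt_pos.2 hpos
  have hsqrt : HasDerivAt (fun y => √(y ^ 2 + δ ^ 2)) (x / √(x ^ 2 + δ ^ 2)) x := by
    convert ((hasDerivAt_pow 2 x).add_const (δ ^ 2)).sqrt hpos.ne' using 1
    field_simp
    ring
  refine ((hasDerivAt_id' x).div hsqrt hsqrt_pos.ne').congr_deriv ?_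
  field_simp
  rw [Real.sq_sqrt hpos.le]
  ring

theorem pseudoHuberDeriv_monotone (hδ : δ ≠ 0) : Monotone (pseudoHuberDeriv δ) :=
  monotone_of_deriv_nonneg (fun x => (hasDerivAt_pseudoHuberDeriv hδ x).differentiableAt)
    fun x => (hasDerivAt_pseudoHuberDeriv hδ x).deriv ▸ by positivity

theorem pseudoHuberDeriv_lipschitzWith (hδ : 0 < δ) :
    LipschitzWith (Real.toNNReal δ)⁻¹ (pseudoHuberDeriv δ) := by
  refine lipschitzWith_of_nnnorm_deriv_le
    (fun x => (hasDerivAt_pseudoHuberDeriv hδ.ne' x).differentiableAt) fun x => ?_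
  rw [← NNReal.coe_le_coe, coe_nnnorm, (hasDerivAt_pseudoHuberDeriv hδ.ne' x).deriv,
    Real.norm_of_nonneg (by positivity), NNReal.coe_inv, Real.coe_toNNReal _ hδ.le]
  have hδ_le_sqrt : δ ≤ √(x ^ 2 + δ ^ 2) := Real.le_sqrt_of_sq_le (by nlinarith [sq_nonneg x])
  calc δ ^ 2 / √(x ^ 2 + δ ^ 2) ^ 3 ≤ δ ^ 2 / δ ^ 3 := by gcongr
    _ = δ⁻¹ := by field_simp

end pseudoHuberDeriv

theorem pseudoHuber_deriv_cocoercive (δ : ℝ) (hδ : 0 < δ) (x₁ x₂ : ℝ) :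
    (x₁ / Real.sqrt (x₁ ^ 2 + δ ^ 2) - x₂ / Real.sqrt (x₂ ^ 2 + δ ^ 2)) ^ 2 ≤
      δ⁻¹ * ((x₁ - x₂) * (x₁ / Real.sqrt (x₁ ^ 2 + δ ^ 2) - x₂ / Real.sqrt (x₂ ^ 2 + δ ^ 2))) := by
  have h := sq_sub_le_mul_mul_sub_of_monotone_of_lipschitzWith (pseudoHuberDeriv_monotone hδ.ne')
    (pseudoHuberDeriv_lipschitzWith hδ) x₁ x₂
  rwa [NNReal.coe_inv, Real.coe_toNNReal _ hδ.le] at h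
end

section
/- Let ξ be an integrable real-valued random variable whose distribution is symmetric about zero (ξ and −ξ have the same law), and let δ > 0. Define g(t) = E[√((t − ξ)² + δ²)]. Then for all t₁, t₂ ∈ ℝ, g(t₂) − g(t₁) ≤ (1/(2δ)) |t₂² − t₁²|. -/
/-!
Write `s(u) = √(u² + δ²)`. Since `ξ` and `-ξ` have the same law,
`2 g(t) = E[s(t - ξ) + s(t + ξ)]`, so it suffices to bound the increments of
`Φₓ(t) = s(t - x) + s(t + x)` for each fixed `x`. The function `Φₓ` is even in `t`. It is convex,
because `s(u) = ‖u + δi‖`, hence nondecreasing in `|t|`; and `Φₓ(t) - t²/δ` is concave, because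
`s'' = δ²/s³ ≤ 1/δ`, hence nonincreasing in `|t|`. Comparing `|t₁|` with `|t₂|`, one of the two
monotonicities gives `Φₓ(t₂) - Φₓ(t₁) ≤ |t₂² - t₁²| / δ`.
-/

open MeasureTheory Set
open scoped ProbabilityTheory

lemma Function.Even.comp_abs {β : Type*} {f : ℝ → β} (hf : f.Even) (x : ℝ) : f |x| = f x := by
  rcases abs_choice x with h | h <;> rw [h]
  exact hf x

lemma Function.Even.comp_sub_add_comp_add {f : ℝ → ℝ} (hf : f.Even) (x : ℝ) :
    Function.Even fun t => f (t - x) + f (t + x) := fun t => by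
  dsimp only
  rw [show -t - x = -(t + x) by ring, show -t + x = -(t - x) by ring, hf, hf, add_comm]

lemma ConvexOn.monotoneOn_Ici_of_even {f : ℝ → ℝ} (hf : ConvexOn ℝ univ f) (he : f.Even) :
    MonotoneOn f (Ici 0) := fun a ha b _ hab => by
  simpa [he b] using hf.le_max_of_mem_Icc (mem_univ (-b)) (mem_univ b)
    ⟨(neg_nonpos.2 (le_trans ha hab)).trans ha, hab⟩

lemma ConcaveOn.antitoneOn_Ici_of_even {f : ℝ → ℝ} (hf : ConcaveOn ℝ univ f) (he : f.Even) :
    AntitoneOn f (Ici 0) := fun a ha b _ hab => by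
  simpa [he b] using hf.min_le_of_mem_Icc (mem_univ (-b)) (mem_univ b)
    ⟨(neg_nonpos.2 (le_trans ha hab)).trans ha, hab⟩

lemma ConvexOn.comp_sub_add_comp_add {f : ℝ → ℝ} (hf : ConvexOn ℝ univ f) (x : ℝ) :
    ConvexOn ℝ univ fun t => f (t - x) + f (t + x) := by
  have h := (hf.translate_right (-x)).add (hf.translate_right x)
  simp only [preimage_univ] at h
  refine h.congr fun t _ => ?_
  simp [sub_eq_neg_add, add_comm]

lemma ConcaveOn.comp_sub_add_comp_add {f : ℝ → ℝ} (hf : ConcaveOn ℝ univ f) (x : ℝ) :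
    ConcaveOn ℝ univ fun t => f (t - x) + f (t + x) :=
  neg_convexOn_iff.1 <| (hf.neg.comp_sub_add_comp_add x).congr fun t _ => by simp [add_comm]

lemma Function.Even.le_add_abs_sq_sub_sq_div {φ : ℝ → ℝ} {c : ℝ} (hc : 0 ≤ c) (he : φ.Even)
    (hmono : MonotoneOn φ (Ici 0)) (hanti : AntitoneOn (fun t => φ t - t ^ 2 / c) (Ici 0))
    (t₁ t₂ : ℝ) : φ t₂ ≤ φ t₁ + |t₂ ^ 2 - t₁ ^ 2| / c := by
  rw [← he.comp_abs t₁, ← he.comp_abs t₂, ← sq_abs t₁, ← sq_abs t₂]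
  rcases le_total |t₁| |t₂| with h | h
  · have hφ := hanti (abs_nonneg t₁) (abs_nonneg t₂) h
    have hsq : (|t₂| ^ 2 - |t₁| ^ 2) / c ≤ |(|t₂|) ^ 2 - |t₁| ^ 2| / c := by
      gcongr
      exact le_abs_self _
    rw [sub_div] at hsq
    linarith
  · have : 0 ≤ |(|t₂|) ^ 2 - |t₁| ^ 2| / c := by positivity
    linarith [hmono (abs_nonneg t₂) (abs_nonneg t₁) h]

section PseudoHuber

variable {δ : ℝ}

lemma even_sqrt_sq_add_sq (δ : ℝ) : Function.Even fun u : ℝ => √(u ^ 2 + δ ^ 2) := fun u => by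
  simp only [even_two.neg_pow]

lemma convexOn_sqrt_sq_add_sq (δ : ℝ) : ConvexOn ℝ univ fun u : ℝ => √(u ^ 2 + δ ^ 2) := by
  have h := ((convexOn_norm convex_univ).translate_right ((δ : ℂ) * Complex.I)).comp_linearMap
    Complex.ofRealCLM.toLinearMap
  simp only [preimage_univ] at h
  refine h.congr fun u _ => ?_
  change ‖(δ : ℂ) * Complex.I + u‖ = _
  rw [add_comm, Complex.norm_add_mul_I]

lemma hasDerivAt_sqrt_sq_add_sq (hδ : δ ≠ 0) (u : ℝ) :
    HasDerivAt (fun u => √(u ^ 2 + δ ^ 2)) (u / √(u ^ 2 + δ ^ 2)) u := by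
  have hpos : 0 < u ^ 2 + δ ^ 2 := by positivity
  convert ((hasDerivAt_pow 2 u).add_const (δ ^ 2)).sqrt hpos.ne' using 1
  field_simp
  ring

lemma hasDerivAt_div_sqrt_sq_add_sq (hδ : δ ≠ 0) (u : ℝ) :
    HasDerivAt (fun u => u / √(u ^ 2 + δ ^ 2)) (δ ^ 2 / √(u ^ 2 + δ ^ 2) ^ 3) u := by
  have hpos : 0 < u ^ 2 + δ ^ 2 := by positivity
  have hs : 0 < √(u ^ 2 + δ ^ 2) := Real.sqrt_pos.2 hpos
  refine ((hasDerivAt_id' u).fun_div (hasDerivAt_sqrt_sq_add_sq hδ u) hs.ne').congr_deriv ?_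
  field_simp
  rw [Real.sq_sqrt hpos.le]
  ring

lemma concaveOn_sqrt_sq_add_sq_sub_sq_div (hδ : 0 < δ) :
    ConcaveOn ℝ univ fun u : ℝ => √(u ^ 2 + δ ^ 2) - u ^ 2 / (2 * δ) := by
  refine concaveOn_of_hasDerivWithinAt2_nonpos convex_univ (by fun_prop)
    (f' := fun u => u / √(u ^ 2 + δ ^ 2) - u / δ)
    (f'' := fun u => δ ^ 2 / √(u ^ 2 + δ ^ 2) ^ 3 - 1 / δ) ?_ ?_ ?_
  · intro u _
    refine (((hasDerivAt_sqrt_sq_add_sq hδ.ne' u).fun_sub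
      ((hasDerivAt_pow 2 u).div_const (2 * δ))).congr_deriv ?_).hasDerivWithinAt
    field_simp
    ring
  · intro u _
    exact ((hasDerivAt_div_sqrt_sq_add_sq hδ.ne' u).fun_sub
      ((hasDerivAt_id' u).div_const δ)).hasDerivWithinAt
  · intro u _
    have hδs : δ ≤ √(u ^ 2 + δ ^ 2) :=
      Real.le_sqrt_of_sq_le (le_add_of_nonneg_left (sq_nonneg u))
    calc δ ^ 2 / √(u ^ 2 + δ ^ 2) ^ 3 - 1 / δ ≤ δ ^ 2 / δ ^ 3 - 1 / δ := by gcongr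
      _ = 0 := by field_simp; ring

lemma monotoneOn_sqrt_sub_sq_add_sqrt_add_sq (δ x : ℝ) :
    MonotoneOn (fun t => √((t - x) ^ 2 + δ ^ 2) + √((t + x) ^ 2 + δ ^ 2)) (Ici 0) :=
  ((convexOn_sqrt_sq_add_sq δ).comp_sub_add_comp_add x).monotoneOn_Ici_of_even
    ((even_sqrt_sq_add_sq δ).comp_sub_add_comp_add x)

lemma antitoneOn_sqrt_sub_sq_add_sqrt_add_sq_sub_sq_div (hδ : 0 < δ) (x : ℝ) :
    AntitoneOn (fun t => √((t - x) ^ 2 + δ ^ 2) + √((t + x) ^ 2 + δ ^ 2) - t ^ 2 / δ)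
      (Ici 0) := by
  have hconc := ((concaveOn_sqrt_sq_add_sq_sub_sq_div hδ).comp_sub_add_comp_add x).add_const
    (x ^ 2 / δ)
  have heven := Function.Even.comp_sub_add_comp_add
    (f := fun u => √(u ^ 2 + δ ^ 2) - u ^ 2 / (2 * δ)) (fun u => by simp only [even_two.neg_pow]) x
  refine (hconc.antitoneOn_Ici_of_even (heven.add (Function.Even.const _))).congr
    fun t _ => ?_
  -- `(t - x)² + (t + x)² = 2t² + 2x²`
  simp only [Pi.add_apply]
  field_simp
  ring

lemma sqrt_sub_sq_add_sqrt_add_sq_le (hδ : 0 < δ) (x t₁ t₂ : ℝ) :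
    √((t₂ - x) ^ 2 + δ ^ 2) + √((t₂ + x) ^ 2 + δ ^ 2) ≤
      √((t₁ - x) ^ 2 + δ ^ 2) + √((t₁ + x) ^ 2 + δ ^ 2) + |t₂ ^ 2 - t₁ ^ 2| / δ :=
  ((even_sqrt_sq_add_sq δ).comp_sub_add_comp_add x).le_add_abs_sq_sub_sq_div hδ.le
    (monotoneOn_sqrt_sub_sq_add_sqrt_add_sq δ x)
    (antitoneOn_sqrt_sub_sq_add_sqrt_add_sq_sub_sq_div hδ x) t₁ t₂

end PseudoHuber

section Integral

variable {Ω : Type*} [MeasurableSpace Ω] {μ : Measure Ω} {ξ : Ω → ℝ}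

lemma integral_comp_neg_of_map_eq_map_neg {E : Type*} [NormedAddCommGroup E] [NormedSpace ℝ E]
    (hξ : AEMeasurable ξ μ) (hsym : μ.map ξ = μ.map (fun ω => -ξ ω)) {f : ℝ → E}
    (hf : AEStronglyMeasurable f (μ.map ξ)) :
    ∫ ω, f (-ξ ω) ∂μ = ∫ ω, f (ξ ω) ∂μ := by
  rw [← integral_map hξ hf, hsym, integral_map (φ := fun ω => -ξ ω) hξ.neg (hsym ▸ hf)]

variable [IsFiniteMeasure μ]

lemma integrable_sqrt_sub_sq_add_sq (hξ : Integrable ξ μ) (t δ : ℝ) :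
    Integrable (fun ω => √((t - ξ ω) ^ 2 + δ ^ 2)) μ := by
  have h := (((integrable_const t).sub hξ).ofReal (𝕜 := ℂ)).add
    (integrable_const ((δ : ℂ) * Complex.I)) |>.norm
  refine h.congr (ae_of_all _ fun ω => ?_)
  change ‖((t - ξ ω : ℝ) : ℂ) + δ * Complex.I‖ = _
  rw [Complex.norm_add_mul_I]

lemma integrable_sqrt_add_sq_add_sq (hξ : Integrable ξ μ) (t δ : ℝ) :
    Integrable (fun ω => √((t + ξ ω) ^ 2 + δ ^ 2)) μ := by
  simpa only [Pi.neg_apply, sub_neg_eq_add] using integrable_sqrt_sub_sq_add_sq hξ.neg t δ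

lemma two_mul_integral_sqrt_sub_sq_add_sq (hξ : Integrable ξ μ)
    (hsym : μ.map ξ = μ.map (fun ω => -ξ ω)) (t δ : ℝ) :
    2 * ∫ ω, √((t - ξ ω) ^ 2 + δ ^ 2) ∂μ =
      ∫ ω, (√((t - ξ ω) ^ 2 + δ ^ 2) + √((t + ξ ω) ^ 2 + δ ^ 2)) ∂μ := by
  have hneg := integral_comp_neg_of_map_eq_map_neg hξ.aemeasurable hsym
    (f := fun y => √((t - y) ^ 2 + δ ^ 2)) (by fun_prop)
  simp only [sub_neg_eq_add] at hneg
  rw [integral_add (integrable_sqrt_sub_sq_add_sq hξ t δ) (integrable_sqrt_add_sq_add_sq hξ t δ),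
    hneg, two_mul]

end Integral

theorem expected_pseudoHuber_upper_increment_general
    {Ω : Type*} [MeasureSpace Ω] [IsProbabilityMeasure (ℙ : Measure Ω)]
    (ξ : Ω → ℝ) (hint : Integrable ξ)
    (hsym : Measure.map ξ (ℙ : Measure Ω) = Measure.map (fun ω => -ξ ω) (ℙ : Measure Ω))
    (δ : ℝ) (hδ : 0 < δ) (t₁ t₂ : ℝ) :
    (∫ ω, Real.sqrt ((t₂ - ξ ω) ^ 2 + δ ^ 2)) - (∫ ω, Real.sqrt ((t₁ - ξ ω) ^ 2 + δ ^ 2)) ≤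
      (1 / (2 * δ)) * |t₂ ^ 2 - t₁ ^ 2| := by
  set Φ := fun t ω => √((t - ξ ω) ^ 2 + δ ^ 2) + √((t + ξ ω) ^ 2 + δ ^ 2)
  have hΦ (t : ℝ) : Integrable (Φ t) :=
    (integrable_sqrt_sub_sq_add_sq hint t δ).add (integrable_sqrt_add_sq_add_sq hint t δ)
  have hmono : ∫ ω, Φ t₂ ω ≤ ∫ ω, (Φ t₁ ω + |t₂ ^ 2 - t₁ ^ 2| / δ) :=
    integral_mono (hΦ t₂) ((hΦ t₁).add (integrable_const _))
      fun ω => sqrt_sub_sq_add_sqrt_add_sq_le hδ (ξ ω) t₁ t₂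
  rw [integral_add (hΦ t₁) (integrable_const _), integral_const, probReal_univ, one_smul,
    ← two_mul_integral_sqrt_sub_sq_add_sq hint hsym, ← two_mul_integral_sqrt_sub_sq_add_sq hint hsym]
    at hmono
  calc _ ≤ |t₂ ^ 2 - t₁ ^ 2| / δ / 2 := by linarith
    _ = _ := by ring

theorem expected_pseudoHuber_upper_increment
    {Ω : Type*} [MeasureSpace Ω] [IsProbabilityMeasure (ℙ : Measure Ω)]
    (ξ : Ω → ℝ) (hmeas : Measurable ξ) (hint : Integrable ξ)
    (hsym : Measure.map ξ (ℙ : Measure Ω) = Measure.map (fun ω => -ξ ω) (ℙ : Measure Ω))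
    (δ : ℝ) (hδ : 0 < δ) (t₁ t₂ : ℝ) :
    (∫ ω, Real.sqrt ((t₂ - ξ ω) ^ 2 + δ ^ 2)) - (∫ ω, Real.sqrt ((t₁ - ξ ω) ^ 2 + δ ^ 2)) ≤
      (1 / (2 * δ)) * |t₂ ^ 2 - t₁ ^ 2| :=
  expected_pseudoHuber_upper_increment_general ξ hint hsym δ hδ t₁ t₂
end

section
/- Let S be a real d₁ × d₂ matrix and α ∈ [0,1] such that every row of S has at most α·d₂ nonzero entries and every column of S has at most α·d₁ nonzero entries. Then the operator (spectral) norm of S satisfies ‖S‖ ≤ α √(d₁ d₂) · max_{i,j} |S_{ij}|. -/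
theorem sparse_matrix_opNorm_bound (d₁ d₂ : ℕ) (S : Matrix (Fin d₁) (Fin d₂) ℝ) (α : ℝ)
    (hα : α ∈ Set.Icc (0 : ℝ) 1)
    (hrow : ∀ i, (({j | S i j ≠ 0} : Set (Fin d₂)).ncard : ℝ) ≤ α * d₂)
    (hcol : ∀ j, (({i | S i j ≠ 0} : Set (Fin d₁)).ncard : ℝ) ≤ α * d₁) :
    ‖LinearMap.toContinuousLinearMap (Matrix.toEuclideanLin S)‖ ≤
      α * Real.sqrt (d₁ * d₂) * ⨆ i, ⨆ j, |S i j| := by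
  obtain ⟨hα0, hα1⟩ := hα
  set M : ℝ := ⨆ i, ⨆ j, |S i j| with hMdef
  have hM0 : 0 ≤ M := Real.iSup_nonneg fun i => Real.iSup_nonneg fun j => abs_nonneg _
  have hM : ∀ i j, |S i j| ≤ M := fun i j =>
    le_trans (le_ciSup (f := fun j => |S i j|) (Set.Finite.bddAbove (Set.finite_range _)) j)
      (le_ciSup (f := fun i => ⨆ j, |S i j|) (Set.Finite.bddAbove (Set.finite_range _)) i)
  have hC : 0 ≤ α * Real.sqrt (d₁ * d₂) * M :=
    mul_nonneg (mul_nonneg hα0 (Real.sqrt_nonneg _)) hM0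
  apply ContinuousLinearMap.opNorm_le_bound _ hC
  intro x
  have hrow' : ∀ i, ((Finset.univ.filter (fun j => S i j ≠ 0)).card : ℝ) ≤ α * d₂ := by
    intro i
    have := hrow i
    rwa [Set.ncard_eq_toFinset_card', Set.toFinset_setOf] at this
  have hcol' : ∀ j, ((Finset.univ.filter (fun i => S i j ≠ 0)).card : ℝ) ≤ α * d₁ := by
    intro j
    have := hcol j
    rwa [Set.ncard_eq_toFinset_card', Set.toFinset_setOf] at this
  have hxnorm : ‖x‖ = Real.sqrt (∑ j, (x j)^2) := by
    rw [EuclideanSpace.norm_eq]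
    congr 1
    exact Finset.sum_congr rfl fun j _ => by rw [Real.norm_eq_abs, sq_abs]
  have happ : ‖(LinearMap.toContinuousLinearMap (Matrix.toEuclideanLin S)) x‖
      = Real.sqrt (∑ i, (∑ j, S i j * x j)^2) := by
    rw [LinearMap.coe_toContinuousLinearMap', EuclideanSpace.norm_eq]
    congr 1
    refine Finset.sum_congr rfl fun i _ => ?_
    rw [Real.norm_eq_abs, sq_abs]
    rfl
  rw [happ, hxnorm]
  set B : ℝ := ∑ j, (x j)^2 with hB
  have hBnn : 0 ≤ B := Finset.sum_nonneg fun j _ => sq_nonneg _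
  classical
  set y : Fin d₁ → Fin d₂ → ℝ := fun i j => if S i j ≠ 0 then x j else 0 with hy
  have step1 : ∀ i, (∑ j, S i j * x j)^2 ≤ (α * d₂ * M^2) * ∑ j, (y i j)^2 := by
    intro i
    have e1 : ∑ j, S i j * x j = ∑ j, S i j * y i j := by
      refine Finset.sum_congr rfl fun j _ => ?_
      by_cases h : S i j = 0 <;> simp [hy, h]
    have cs := Finset.sum_mul_sq_le_sq_mul_sq Finset.univ (fun j => S i j) (fun j => y i j)
    have e2 : ∑ j, (S i j)^2 ≤ α * d₂ * M^2 := by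
      have h1 : ∑ j ∈ Finset.univ.filter (fun j => S i j ≠ 0), (S i j)^2 = ∑ j, (S i j)^2 :=
        Finset.sum_filter_of_ne (fun j _ hne => fun h => hne (by rw [h]; ring))
      have h2 : ∑ j ∈ Finset.univ.filter (fun j => S i j ≠ 0), (S i j)^2
          ≤ (Finset.univ.filter (fun j => S i j ≠ 0)).card • M^2 :=
        Finset.sum_le_card_nsmul _ _ _ fun j _ => by
          rw [← sq_abs]; exact pow_le_pow_left₀ (abs_nonneg _) (hM i j) 2
      rw [nsmul_eq_mul] at h2
      calc ∑ j, (S i j)^2 ≤ ((Finset.univ.filter (fun j => S i j ≠ 0)).card : ℝ) * M^2 :=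
            h1 ▸ h2
        _ ≤ (α * d₂) * M^2 := mul_le_mul_of_nonneg_right (hrow' i) (sq_nonneg _)
    calc (∑ j, S i j * x j)^2 = (∑ j, S i j * y i j)^2 := by rw [e1]
      _ ≤ (∑ j, (S i j)^2) * ∑ j, (y i j)^2 := cs
      _ ≤ (α * d₂ * M^2) * ∑ j, (y i j)^2 :=
          mul_le_mul_of_nonneg_right e2 (Finset.sum_nonneg fun j _ => sq_nonneg _)
  have sum_y : ∑ i, ∑ j, (y i j)^2 ≤ α * d₁ * B := by
    rw [Finset.sum_comm]
    calc ∑ j, ∑ i, (y i j)^2 ≤ ∑ j, (α * d₁) * (x j)^2 := by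
          refine Finset.sum_le_sum fun j _ => ?_
          have hyj : ∑ i, (y i j)^2
              = ((Finset.univ.filter (fun i => S i j ≠ 0)).card : ℝ) * (x j)^2 := by
            simp only [hy]
            rw [Finset.sum_congr rfl (fun i _ => apply_ite (· ^ 2) (S i j ≠ 0) (x j) 0),
              Finset.sum_ite, Finset.sum_const, Finset.sum_const, nsmul_eq_mul]
            simp
          rw [hyj]
          exact mul_le_mul_of_nonneg_right (hcol' j) (sq_nonneg _)
      _ = α * d₁ * B := by rw [← Finset.mul_sum]
  have key : ∑ i, (∑ j, S i j * x j)^2 ≤ (α * Real.sqrt (d₁ * d₂) * M)^2 * B := by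
    calc ∑ i, (∑ j, S i j * x j)^2 ≤ ∑ i, (α * d₂ * M^2) * ∑ j, (y i j)^2 :=
          Finset.sum_le_sum fun i _ => step1 i
      _ = (α * d₂ * M^2) * ∑ i, ∑ j, (y i j)^2 := by rw [← Finset.mul_sum]
      _ ≤ (α * d₂ * M^2) * (α * d₁ * B) := by
          refine mul_le_mul_of_nonneg_left sum_y ?_
          positivity
      _ = (α * Real.sqrt (d₁ * d₂) * M)^2 * B := by
          rw [mul_pow, mul_pow, Real.sq_sqrt (by positivity)]
          push_cast
          ring
  calc Real.sqrt (∑ i, (∑ j, S i j * x j)^2) ≤ Real.sqrt ((α * Real.sqrt (d₁ * d₂) * M)^2 * B) :=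
        Real.sqrt_le_sqrt key
    _ = (α * Real.sqrt (d₁ * d₂) * M) * Real.sqrt B := by
        rw [Real.sqrt_mul (sq_nonneg _), Real.sqrt_sq hC]
end

section
/- Let U, U* ∈ ℝ^{d×r} both have orthonormal columns, and set H = Uᵀ U*. Then the row-wise ℓ2 sup-norm satisfies ‖U Uᵀ − U* U*ᵀ‖_{2,∞} ≤ ‖U H − U*‖_{2,∞} + ‖U‖_{2,∞} · ‖U Uᵀ − U* U*ᵀ‖_F. -/
open Matrix
/-- Row-wise ℓ2 sup-norm ‖A‖_{2,∞} of a real matrix. -/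
noncomputable def rowSupNorm {m n : Type*} [Fintype n] (A : Matrix m n ℝ) : ℝ :=
  ⨆ i, Real.sqrt (∑ j, (A i j) ^ 2)

/-- Frobenius norm of a real matrix. -/
noncomputable def frobNorm {m n : Type*} [Fintype m] [Fintype n] (A : Matrix m n ℝ) : ℝ :=
  Real.sqrt (∑ i, ∑ j, (A i j) ^ 2)

/-!
Write `P = UUᵀ - U*U*ᵀ`. Since `UᵀU = 1`, `P = (UH - U*) U*ᵀ + U (Uᵀ P)`. Row norms satisfy
`‖AB‖_{2,∞} ≤ ‖A‖_{2,∞} ‖B‖` for the spectral norm `‖B‖`; a matrix with orthonormal columns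
(and its transpose) has spectral norm at most `1`, and the spectral norm is dominated by the
Frobenius norm, so `‖Uᵀ P‖ ≤ ‖P‖_F`.
-/

open WithLp
open scoped Matrix.Norms.L2Operator

section

variable {m n p : Type*} [Fintype n]

theorem sqrt_sum_sq_eq_norm_toLp (x : n → ℝ) : √(∑ j, x j ^ 2) = ‖toLp 2 x‖ := by
  simp [EuclideanSpace.norm_eq]

theorem rowSupNorm_eq_iSup_norm (A : Matrix m n ℝ) : rowSupNorm A = ⨆ i, ‖toLp 2 (A i)‖ := by
  simp only [rowSupNorm, sqrt_sum_sq_eq_norm_toLp]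

theorem rowSupNorm_nonneg (A : Matrix m n ℝ) : 0 ≤ rowSupNorm A := by
  rw [rowSupNorm_eq_iSup_norm]
  exact Real.iSup_nonneg fun i => norm_nonneg _

theorem rowSupNorm_le {A : Matrix m n ℝ} {c : ℝ} (hc : 0 ≤ c) (h : ∀ i, ‖toLp 2 (A i)‖ ≤ c) :
    rowSupNorm A ≤ c := by
  rw [rowSupNorm_eq_iSup_norm]
  exact Real.iSup_le h hc

theorem norm_toLp_row_le_rowSupNorm [Finite m] (A : Matrix m n ℝ) (i : m) :
    ‖toLp 2 (A i)‖ ≤ rowSupNorm A := by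
  rw [rowSupNorm_eq_iSup_norm]
  exact le_ciSup (Set.finite_range fun i => ‖toLp 2 (A i)‖).bddAbove i

theorem rowSupNorm_add_le [Finite m] (A B : Matrix m n ℝ) :
    rowSupNorm (A + B) ≤ rowSupNorm A + rowSupNorm B :=
  rowSupNorm_le (add_nonneg (rowSupNorm_nonneg A) (rowSupNorm_nonneg B)) fun i =>
    (norm_add_le (toLp 2 (A i)) (toLp 2 (B i))).trans
      (add_le_add (norm_toLp_row_le_rowSupNorm A i) (norm_toLp_row_le_rowSupNorm B i))

theorem l2_opNorm_transpose [Fintype m] [DecidableEq m] [DecidableEq n] (A : Matrix m n ℝ) :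
    ‖Aᵀ‖ = ‖A‖ := by
  rw [← conjTranspose_eq_transpose_of_trivial, l2_opNorm_conjTranspose]

theorem rowSupNorm_mul_le [Finite m] [Fintype p] [DecidableEq p] (A : Matrix m n ℝ)
    (B : Matrix n p ℝ) : rowSupNorm (A * B) ≤ rowSupNorm A * ‖B‖ := by
  classical
  refine rowSupNorm_le (mul_nonneg (rowSupNorm_nonneg A) (norm_nonneg B)) fun i => ?_
  calc ‖toLp 2 ((A * B) i)‖ = ‖toLp 2 (Bᵀ *ᵥ A i)‖ := by rw [mulVec_transpose]; rfl
    _ ≤ ‖Bᵀ‖ * ‖toLp 2 (A i)‖ := l2_opNorm_mulVec _ _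
    _ ≤ rowSupNorm A * ‖B‖ := by
      rw [l2_opNorm_transpose, mul_comm]
      gcongr
      exact norm_toLp_row_le_rowSupNorm A i

theorem l2_opNorm_le_frobNorm [Fintype m] [DecidableEq n] (A : Matrix m n ℝ) :
    ‖A‖ ≤ frobNorm A := by
  refine ContinuousLinearMap.opNorm_le_bound _ (Real.sqrt_nonneg _) fun x => ?_
  have hsq : ∑ i, (A *ᵥ x) i ^ 2 ≤ (∑ i, ∑ j, A i j ^ 2) * ∑ j, x j ^ 2 := by
    rw [Finset.sum_mul]
    exact Finset.sum_le_sum fun i _ => Finset.sum_mul_sq_le_sq_mul_sq _ _ _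
  calc _ = √(∑ i, (A *ᵥ x) i ^ 2) := (sqrt_sum_sq_eq_norm_toLp _).symm
    _ ≤ √((∑ i, ∑ j, A i j ^ 2) * ∑ j, x j ^ 2) := Real.sqrt_le_sqrt hsq
    _ = frobNorm A * ‖x‖ := by
      rw [Real.sqrt_mul (by positivity), sqrt_sum_sq_eq_norm_toLp]
      rfl

theorem l2_opNorm_transpose_le_one [Fintype m] [DecidableEq m] [DecidableEq n] {V : Matrix m n ℝ}
    (hV : Vᵀ * V = 1) : ‖Vᵀ‖ ≤ 1 := by
  have hone : ‖(1 : Matrix n n ℝ)‖ ≤ 1 :=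
    ContinuousLinearMap.opNorm_le_bound _ zero_le_one fun x => by simp
  have hsq : ‖V‖ * ‖V‖ ≤ 1 := by
    rwa [← l2_opNorm_conjTranspose_mul_self, conjTranspose_eq_transpose_of_trivial, hV]
  rw [l2_opNorm_transpose]
  nlinarith [norm_nonneg V]

end

theorem two_inf_norm_transfer {d r : ℕ} (U Ustar : Matrix (Fin d) (Fin r) ℝ)
    (hU : Uᵀ * U = 1) (hUstar : Ustarᵀ * Ustar = 1) :
    rowSupNorm (U * Uᵀ - Ustar * Ustarᵀ) ≤
      rowSupNorm (U * (Uᵀ * Ustar) - Ustar) +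
        rowSupNorm U * frobNorm (U * Uᵀ - Ustar * Ustarᵀ) := by
  set P := U * Uᵀ - Ustar * Ustarᵀ
  have hP : P = (U * (Uᵀ * Ustar) - Ustar) * Ustarᵀ + U * (Uᵀ * P) := by
    simp only [P, Matrix.mul_sub, Matrix.sub_mul, ← Matrix.mul_assoc, hU, Matrix.one_mul]
    abel
  have hUP : ‖Uᵀ * P‖ ≤ frobNorm P :=
    (l2_opNorm_mul _ _).trans <| (mul_le_mul (l2_opNorm_transpose_le_one hU)
      (l2_opNorm_le_frobNorm P) (norm_nonneg _) zero_le_one).trans_eq (one_mul _)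
  calc rowSupNorm P
      ≤ rowSupNorm ((U * (Uᵀ * Ustar) - Ustar) * Ustarᵀ) + rowSupNorm (U * (Uᵀ * P)) :=
        (congrArg rowSupNorm hP).trans_le (rowSupNorm_add_le _ _)
    _ ≤ rowSupNorm (U * (Uᵀ * Ustar) - Ustar) * ‖Ustarᵀ‖ + rowSupNorm U * ‖Uᵀ * P‖ :=
        add_le_add (rowSupNorm_mul_le _ _) (rowSupNorm_mul_le _ _)
    _ ≤ rowSupNorm (U * (Uᵀ * Ustar) - Ustar) + rowSupNorm U * frobNorm P := by
        gcongr
        · exact mul_le_of_le_one_right (rowSupNorm_nonneg _) (l2_opNorm_transpose_le_one hUstar)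
        · exact rowSupNorm_nonneg U
end
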